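/- arXiv:2302.13181 — 4 statements merged into one kernel-verified Lean document; each statement's English description precedes it below -/
import Mathlib

section
/- Let m, n be integers with n/4 ≤ m ≤ 3n/4. Suppose m numbers are chosen independently and uniformly at random from {1,…,n}. Then with probability at least 1 − 2·exp(−n/2048), at least n/8 numbers in {1,…,n} are selected exactly once. -/
/-!
Every bin `b` satisfies `hits b + 2·[b missed] + [b hit once] ≥ 2`; summing over the `n` bins
gives `2n ≤ m + 2Z + X`, where `Z` counts the missed bins and `X` the bins hit exactly once.
So `X < n/8` forces `Z ≥ 15n/16 - m/2`, while `Z` is typically about `n (1 - 1/n)^m ≤ n e^{-m/n}`.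
A Chernoff bound through the moment
`E[(21/20)^Z] = ∑ₖ C(n,k) (1/20)^k (1 - k/n)^m ≤ exp (n e^{-m/n} / 20)`
makes this deviation exponentially unlikely: for `m/n ∈ [1/4, 3/4]` the exponent is at most
`-n/2048`, by convexity of `exp` between the endpoints.
-/

open MeasureTheory Finset Real
open scoped ENNReal Nat

namespace BallsInBins

variable {α β : Type*} [Fintype α] [Fintype β] [DecidableEq β]

def hits (f : α → β) (b : β) : ℕ := #{a | f a = b}

def missed (f : α → β) : Finset β := {b | hits f b = 0}

def hitOnce (f : α → β) : Finset β := {b | hits f b = 1}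

lemma sum_hits (f : α → β) : ∑ b, hits f b = Fintype.card α :=
  (card_eq_sum_card_fiberwise fun a _ => mem_univ (f a)).symm

lemma two_mul_card_le_card_add_missed_add_hitOnce (f : α → β) :
    2 * Fintype.card β ≤ Fintype.card α + 2 * #(missed f) + #(hitOnce f) := by
  have hbin : ∀ b,
      2 ≤ hits f b + (if hits f b = 0 then 2 else 0) + if hits f b = 1 then 1 else 0 :=
    fun b => by split_ifs <;> omega
  have := sum_le_sum fun b (_ : b ∈ univ) => hbin b
  simp only [sum_add_distrib, sum_hits, sum_const, card_univ, smul_eq_mul, ← sum_filter] at this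
  simpa [missed, hitOnce, mul_comm] using this

lemma subset_missed_iff {S : Finset β} {f : α → β} : S ⊆ missed f ↔ ∀ a, f a ∈ Sᶜ := by
  simp only [subset_iff, missed, hits, mem_filter, mem_univ, true_and, card_eq_zero,
    filter_eq_empty_iff, mem_compl]
  exact ⟨fun h a ha => h ha trivial rfl, fun h b hb a _ hab => h a (hab ▸ hb)⟩

variable [DecidableEq α]

lemma card_subset_missed (S : Finset β) :
    #{f : α → β | S ⊆ missed f} = (Fintype.card β - #S) ^ Fintype.card α := by
  have : ({f : α → β | S ⊆ missed f} : Finset _) = Fintype.piFinset fun _ => Sᶜ := by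
    ext f
    simp [subset_missed_iff]
  rw [this, Fintype.card_piFinset, prod_const, card_compl, card_univ]

/-- Expand `(1 + t) ^ #(missed f)` over the subsets `S ⊆ missed f`, then count the maps that
avoid `S`. -/
lemma sum_pow_card_missed {R : Type*} [CommSemiring R] (t : R) :
    ∑ f : α → β, (1 + t) ^ #(missed f) =
      ∑ k ∈ range (Fintype.card β + 1),
        (Fintype.card β).choose k * t ^ k * ((Fintype.card β - k : ℕ) : R) ^ Fintype.card α := by
  calc ∑ f : α → β, (1 + t) ^ #(missed f)
      = ∑ f : α → β, ∑ S : Finset β, if S ⊆ missed f then t ^ #S else 0 := by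
        refine sum_congr rfl fun f _ => ?_
        rw [← sum_filter, filter_subset_univ]
        simpa using prod_one_add (f := fun _ => t) (missed f)
    _ = ∑ S : Finset β, t ^ #S * ((Fintype.card β - #S : ℕ) : R) ^ Fintype.card α := by
        rw [sum_comm]
        refine sum_congr rfl fun S _ => ?_
        rw [← sum_filter, sum_const, card_subset_missed, nsmul_eq_mul, mul_comm, Nat.cast_pow]
    _ = _ := by
        rw [← powerset_univ, sum_powerset_apply_card
          fun k => t ^ k * ((Fintype.card β - k : ℕ) : R) ^ Fintype.card α, card_univ]
        simp only [nsmul_eq_mul, mul_assoc]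

lemma sub_le_mul_exp_neg_div {x y : ℝ} (hy : 0 < y) : y - x ≤ y * exp (-(x / y)) := by
  calc y - x = y * (-(x / y) + 1) := by field_simp; ring
    _ ≤ y * exp (-(x / y)) := mul_le_mul_of_nonneg_left (add_one_le_exp _) hy.le

lemma choose_mul_pow_mul_sub_pow_le {n k : ℕ} (m : ℕ) (hn : 0 < n) (hk : k ≤ n) {t : ℝ}
    (ht : 0 ≤ t) :
    n.choose k * t ^ k * ((n - k : ℕ) : ℝ) ^ m ≤
      n ^ m * ((t * n * exp (-(m / n))) ^ k / k !) := by
  have hn' : (0 : ℝ) < n := by exact_mod_cast hn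
  have hsub : ((n - k : ℕ) : ℝ) ^ m ≤ n ^ m * exp (-(m / n)) ^ k := by
    rw [← Real.exp_nat_mul, show (k : ℝ) * -(m / n) = m * -(k / n) by ring, Real.exp_nat_mul,
      ← mul_pow]
    exact pow_le_pow_left₀ (Nat.cast_nonneg _)
      ((Nat.cast_sub hk).trans_le (sub_le_mul_exp_neg_div hn')) m
  calc n.choose k * t ^ k * ((n - k : ℕ) : ℝ) ^ m
      ≤ (n ^ k / k !) * t ^ k * (n ^ m * exp (-(m / n)) ^ k) := by
        gcongr
        exact Nat.choose_le_pow_div k n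
    _ = n ^ m * ((t * n * exp (-(m / n))) ^ k / k !) := by ring

lemma sum_pow_card_missed_le (hβ : 0 < Fintype.card β) {t : ℝ} (ht : 0 ≤ t) :
    ∑ f : α → β, (1 + t) ^ #(missed f) ≤
      Fintype.card β ^ Fintype.card α *
        exp (t * Fintype.card β * exp (-(Fintype.card α / Fintype.card β))) := by
  set n := Fintype.card β
  set m := Fintype.card α
  rw [sum_pow_card_missed]
  calc ∑ k ∈ range (n + 1), n.choose k * t ^ k * ((n - k : ℕ) : ℝ) ^ m
      ≤ ∑ k ∈ range (n + 1), n ^ m * ((t * n * exp (-(m / n))) ^ k / k !) :=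
        sum_le_sum fun k hk =>
          choose_mul_pow_mul_sub_pow_le m hβ (Nat.lt_succ_iff.1 (mem_range.1 hk)) ht
    _ = n ^ m * ∑ k ∈ range (n + 1), (t * n * exp (-(m / n))) ^ k / k ! := (mul_sum ..).symm
    _ ≤ n ^ m * exp (t * n * exp (-(m / n))) := by
        gcongr
        exact sum_le_exp_of_nonneg (by positivity) _

lemma card_le_card_missed_le (hβ : 0 < Fintype.card β) {l : ℝ} (hl : 0 ≤ l) (a : ℝ) :
    (#{f : α → β | a ≤ #(missed f)} : ℝ) ≤
      Fintype.card β ^ Fintype.card α *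
        exp ((exp l - 1) * Fintype.card β * exp (-(Fintype.card α / Fintype.card β)) - l * a) := by
  have hmarkov : (#{f : α → β | a ≤ #(missed f)} : ℝ) * exp (l * a) ≤
      ∑ f : α → β, exp l ^ #(missed f) := by
    calc _ = #{f : α → β | a ≤ #(missed f)} • exp (l * a) := (nsmul_eq_mul _ _).symm
      _ ≤ ∑ f ∈ {f : α → β | a ≤ #(missed f)}, exp (l * #(missed f)) :=
          card_nsmul_le_sum _ _ _ fun f hf =>
            exp_le_exp.2 (mul_le_mul_of_nonneg_left (mem_filter.1 hf).2 hl)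
      _ ≤ ∑ f : α → β, exp (l * #(missed f)) :=
          sum_le_sum_of_subset_of_nonneg (subset_univ _) fun _ _ _ => (exp_pos _).le
      _ = _ := by simp_rw [mul_comm l, Real.exp_nat_mul]
  have hmoment := sum_pow_card_missed_le (α := α) hβ (sub_nonneg.2 (one_le_exp hl))
  rw [add_sub_cancel] at hmoment
  rw [exp_sub, mul_div_assoc', le_div_iff₀ (exp_pos _)]
  exact hmarkov.trans hmoment

lemma exp_neg_le_inv_sum_range {x : ℝ} (hx : 0 < x) (N : ℕ) :
    exp (-x) ≤ (∑ i ∈ range (N + 1), x ^ i / i !)⁻¹ := by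
  rw [exp_neg]
  exact inv_anti₀ (by positivity) (sum_le_exp_of_nonneg hx.le _)

lemma exp_neg_le_chord {s : ℝ} (h₁ : 1 / 4 ≤ s) (h₂ : s ≤ 3 / 4) :
    exp (-s) ≤ 2 * (3 / 4 - s) * exp (-(1 / 4)) + 2 * (s - 1 / 4) * exp (-(3 / 4)) := by
  have := convexOn_exp.2 (Set.mem_univ (-(1 / 4))) (Set.mem_univ (-(3 / 4)))
    (by linarith : (0 : ℝ) ≤ 2 * (3 / 4 - s)) (by linarith : (0 : ℝ) ≤ 2 * (s - 1 / 4)) (by ring)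
  simp only [smul_eq_mul] at this
  rwa [show 2 * (3 / 4 - s) * -(1 / 4) + 2 * (s - 1 / 4) * -(3 / 4) = -s by ring] at this

/-- The exponent of the Chernoff bound for `1 + t = 21/20`, per bin, when `m = s n`. -/
lemma exp_neg_div_twenty_sub_log_mul_le {s : ℝ} (h₁ : 1 / 4 ≤ s) (h₂ : s ≤ 3 / 4) :
    exp (-s) / 20 - log (21 / 20) * (15 / 16 - s / 2) ≤ -1 / 2048 := by
  have hchord := exp_neg_le_chord h₁ h₂
  have hquarter : exp (-(1 / 4)) ≤ 384 / 493 := by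
    convert exp_neg_le_inv_sum_range (x := 1 / 4) (by norm_num) 3 using 1
    norm_num [sum_range_succ, Nat.factorial]
  have hthreequarters : exp (-(3 / 4)) ≤ 32 / 65 := by
    convert exp_neg_le_inv_sum_range (x := 3 / 4) (by norm_num) 2 using 1
    norm_num [sum_range_succ, Nat.factorial]
  have hlog : 243 / 5000 ≤ log (21 / 20) := by
    rw [le_log_iff_exp_le (by norm_num)]
    refine (exp_bound' (x := 243 / 5000) (by norm_num) (by norm_num) (n := 3) (by norm_num)).trans
      ?_
    norm_num [sum_range_succ, Nat.factorial]
  nlinarith [mul_le_mul_of_nonneg_left hquarter (by linarith : (0 : ℝ) ≤ 2 * (3 / 4 - s)),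
    mul_le_mul_of_nonneg_left hthreequarters (by linarith : (0 : ℝ) ≤ 2 * (s - 1 / 4)),
    mul_le_mul_of_nonneg_right hlog (by linarith : (0 : ℝ) ≤ 15 / 16 - s / 2)]

lemma card_few_hitOnce_le (hβ : 0 < Fintype.card β)
    (h₁ : (Fintype.card β : ℝ) / 4 ≤ Fintype.card α)
    (h₂ : (Fintype.card α : ℝ) ≤ 3 * Fintype.card β / 4) :
    (#{f : α → β | ¬ (Fintype.card β : ℝ) / 8 ≤ #(hitOnce f)} : ℝ) ≤
      exp (-(Fintype.card β : ℝ) / 2048) * Fintype.card β ^ Fintype.card α := by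
  set n := Fintype.card β
  set m := Fintype.card α
  have hn : (0 : ℝ) < n := by exact_mod_cast hβ
  set a : ℝ := 15 * n / 16 - m / 2 with ha
  have hsub : ({f : α → β | ¬ (n : ℝ) / 8 ≤ #(hitOnce f)} : Finset (α → β)) ⊆
      ({f : α → β | a ≤ #(missed f)} : Finset (α → β)) := by
    intro f
    simp only [mem_filter, mem_univ, true_and, not_le]
    have : (2 * n : ℝ) ≤ m + 2 * #(missed f) + #(hitOnce f) := by
      exact_mod_cast two_mul_card_le_card_add_missed_add_hitOnce f
    intro h
    linarith
  have hexponent : (exp (log (21 / 20)) - 1) * n * exp (-(m / n)) - log (21 / 20) * a ≤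
      -n / 2048 := by
    calc _ = n * (exp (-(m / n)) / 20 - log (21 / 20) * (15 / 16 - m / n / 2)) := by
          rw [ha, exp_log (by norm_num)]
          field_simp
          ring
      _ ≤ n * (-1 / 2048) := by
          gcongr
          exact exp_neg_div_twenty_sub_log_mul_le
            (by rw [le_div_iff₀ hn]; linarith) (by rw [div_le_iff₀ hn]; linarith)
      _ = -n / 2048 := by ring
  calc (#{f : α → β | ¬ (n : ℝ) / 8 ≤ #(hitOnce f)} : ℝ)
      ≤ #{f : α → β | a ≤ #(missed f)} := by exact_mod_cast card_le_card hsub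
    _ ≤ n ^ m * exp ((exp (log (21 / 20)) - 1) * n * exp (-(m / n)) - log (21 / 20) * a) :=
        card_le_card_missed_le hβ (log_nonneg (by norm_num)) a
    _ ≤ exp (-n / 2048) * n ^ m := by
        rw [mul_comm]
        gcongr

end BallsInBins

lemma one_sub_le_toReal_inv_card_smul_count {Ω : Type*} [Fintype Ω] [Nonempty Ω]
    [MeasurableSpace Ω] [MeasurableSingletonClass Ω] (p : Ω → Prop) [DecidablePred p] {ε : ℝ}
    (h : (#{ω | ¬ p ω} : ℝ) ≤ ε * Fintype.card Ω) :
    1 - ε ≤ (((Fintype.card Ω : ℝ≥0∞)⁻¹ • (Measure.count : Measure Ω)) {ω | p ω}).toReal := by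
  have hpos : (0 : ℝ) < Fintype.card Ω := by exact_mod_cast Fintype.card_pos
  have hsplit : (#{ω | p ω} : ℝ) + #{ω | ¬ p ω} = Fintype.card Ω := by
    exact_mod_cast card_filter_add_card_filter_not p
  rw [Measure.smul_apply, smul_eq_mul, ← coe_filter_univ, Measure.count_apply_finset,
    ENNReal.toReal_mul, ENNReal.toReal_inv, ENNReal.toReal_natCast, ENNReal.toReal_natCast,
    le_inv_mul_iff₀ hpos]
  linarith

open BallsInBins

/-- If `m` numbers with `n/4 ≤ m ≤ 3n/4` are chosen independently and uniformly at random
from `{1, …, n}`, then with probability at least `1 − 2·exp(−n/2048)` at least `n/8`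
numbers are selected exactly once. -/
theorem many_singletons_whp (n m : ℕ) (hn : 0 < n)
    (h₁ : (n : ℝ) / 4 ≤ m) (h₂ : (m : ℝ) ≤ 3 * n / 4) :
    1 - 2 * Real.exp (-(n : ℝ) / 2048) ≤
      ((((n : ℝ≥0∞) ^ m)⁻¹ • (Measure.count : Measure (Fin m → Fin n)))
        {f | (n : ℝ) / 8 ≤
          ((Finset.univ.filter (fun k : Fin n =>
            (Finset.univ.filter (fun i : Fin m => f i = k)).card = 1)).card : ℝ)}).toReal := by
  have : Nonempty (Fin m → Fin n) := ⟨fun _ => ⟨0, hn⟩⟩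
  have hbad : (#{f : Fin m → Fin n | ¬ (n : ℝ) / 8 ≤ #(hitOnce f)} : ℝ) ≤
      exp (-(n : ℝ) / 2048) * Fintype.card (Fin m → Fin n) := by
    simpa using card_few_hitOnce_le (α := Fin m) (β := Fin n) (by simpa) (by simpa) (by simpa)
  have hcard : (n : ℝ≥0∞) ^ m = Fintype.card (Fin m → Fin n) := by simp
  rw [hcard]
  refine le_trans ?_ (one_sub_le_toReal_inv_card_smul_count _ hbad)
  linarith [exp_pos (-(n : ℝ) / 2048)]
end

section
/- Let p_T be a probability distribution supported on a disjoint union of 2κ unit circles C₁,…,C_{2κ} in ℝ^d (pairwise distance at least 3), uniform on each circle, with p_T(C_i) = 1/(3κ) for i ∈ T and p_T(C_i) = 2/(3κ) for i ∉ T, where |T| = κ. Then p_T is 1-regular, and for ε = 1/3 its regularity constant satisfies 1/(9κ) ≤ (p_T)_ε ≤ 2/(3κ). -/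
open MeasureTheory Metric
open scoped ENNReal

def msupport {d : ℕ} (p : Measure (EuclideanSpace ℝ (Fin d))) :
    Set (EuclideanSpace ℝ (Fin d)) :=
  {x | ∀ r : ℝ, 0 < r → 0 < p (ball x r)}

/-- `c` is a valid regularity constant `p_ε` witnessing `k`-regularity of `p` at scale `ε`. -/
def ValidReg {d : ℕ} (p : Measure (EuclideanSpace ℝ (Fin d))) (k : ℕ) (ε c : ℝ) : Prop :=
  0 < c ∧ c ≤ 1 ∧
  ∀ x ∈ msupport p, ∀ s r : ℝ, 0 < s → s < r →
    (p (closedBall x r)).toReal ≤ c →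
    (1 + ε / 3)⁻¹ * (r / s) ^ k ≤
        (p (closedBall x r)).toReal / (p (closedBall x s)).toReal ∧
    (p (closedBall x r)).toReal / (p (closedBall x s)).toReal ≤
        (1 + ε / 3) * (r / s) ^ k

/-!
A ball of radius `s < 2` around a point of one circle cuts out of it an arc of angular length
`4 arcsin (s / 2)` and, the circles being `3` apart, misses all the others, so its mass is
`p_T(C_i) · 2 arcsin (s / 2) / π`. As `t ≤ arcsin t ≤ L t` on `[0, τ]` for any `L > 1` and small
`τ`, the ratio of two such masses is `r / s` up to a factor `L`, as soon as the mass bound forces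
`r ≤ 2τ`. For `ε = 1/3` one can take `L = 10/9` and `τ = 1/2`, which at the lightest weight
`1/(3κ)` is the mass `1/(9κ)`. Conversely, the balls of radii `2` and `5/2` about a point both
carry exactly the mass `≤ 2/(3κ)` of its circle, while `5/4 > 10/9`.
-/

open Real Set

lemma self_le_arcsin {t : ℝ} (h0 : 0 ≤ t) (h1 : t ≤ 1) : t ≤ arcsin t :=
  (le_arcsin_iff_sin_le' ⟨by linarith [pi_gt_three], by linarith [pi_gt_three]⟩).2 (sin_le h0)

lemma arcsin_le_mul {t L : ℝ} (ht : 0 ≤ t) (hL : 1 ≤ L) (hLt : L * t ≤ 1)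
    (hcube : L ^ 3 * t ^ 2 ≤ 6 * (L - 1)) : arcsin t ≤ L * t := by
  refine (arcsin_le_iff_le_sin' ⟨by nlinarith [pi_gt_three], by linarith [pi_gt_three]⟩).2 ?_
  calc t ≤ L * t - (L * t) ^ 3 / 6 := by nlinarith [mul_le_mul_of_nonneg_right hcube ht]
    _ ≤ sin (L * t) := sin_ge_sub_cube (by positivity)

lemma exists_forall_arcsin_le_mul {L : ℝ} (hL : 1 < L) :
    ∃ τ, 0 < τ ∧ τ < 1 ∧ ∀ t ∈ Icc 0 τ, arcsin t ≤ L * t := by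
  set L' := min L 2
  have hL' : 1 < L' := lt_min hL one_lt_two
  have hL'2 : L' ≤ 2 := min_le_right _ _
  refine ⟨(L' - 1) / 2, by linarith, by linarith, fun t ⟨ht0, htτ⟩ => ?_⟩
  have hcube : L' ^ 3 ≤ 8 := by nlinarith [pow_le_pow_left₀ (by linarith) hL'2 3]
  calc arcsin t ≤ L' * t := arcsin_le_mul ht0 hL'.le (by nlinarith)
        (by nlinarith [mul_le_mul_of_nonneg_right hcube (sq_nonneg t)])
    _ ≤ L * t := mul_le_mul_of_nonneg_right (min_le_left _ _) ht0

lemma arcsin_div_arcsin_mem_Icc {s r τ L : ℝ} (hs : 0 < s) (hsr : s < r) (hrτ : r ≤ τ)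
    (hτ : τ ≤ 1) (hL : ∀ t ∈ Icc 0 τ, arcsin t ≤ L * t) :
    arcsin r / arcsin s ∈ Icc (L⁻¹ * (r / s)) (L * (r / s)) := by
  have hs_pos : 0 < arcsin s := arcsin_pos.2 hs
  have hs_lb := self_le_arcsin hs.le (by linarith)
  have hr_lb := self_le_arcsin (hs.trans hsr).le (by linarith)
  have hs_ub := hL s ⟨hs.le, by linarith⟩
  have hr_ub := hL r ⟨by linarith, hrτ⟩
  have hL0 : 0 < L := pos_of_mul_pos_left (hs_pos.trans_le hs_ub) hs.le
  constructor
  · calc L⁻¹ * (r / s) = r / (L * s) := by field_simp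
      _ ≤ arcsin r / arcsin s := div_le_div₀ (by linarith) hr_lb hs_pos hs_ub
  · calc arcsin r / arcsin s ≤ L * r / s :=
          div_le_div₀ (mul_pos hL0 (hs.trans hsr)).le hr_ub hs hs_lb
      _ = L * (r / s) := by ring

lemma cos_le_cos_iff_abs_le {b φ : ℝ} (hb0 : 0 ≤ b) (hbπ : b ≤ π) (hφ : |φ| ≤ π) :
    cos b ≤ cos φ ↔ |φ| ≤ b := by
  rw [← cos_abs φ]
  exact strictAntiOn_cos.le_iff_ge ⟨hb0, hbπ⟩ ⟨abs_nonneg φ, hφ⟩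

lemma volume_cos_le_cos_sub_inter_Ioc (θ₀ : ℝ) {b : ℝ} (hb0 : 0 ≤ b) (hbπ : b < π) :
    volume ({θ | cos b ≤ cos (θ - θ₀)} ∩ Ioc 0 (2 * π)) = ENNReal.ofReal (2 * b) := by
  set A : Set ℝ := {θ | cos b ≤ cos (θ - θ₀)}
  have hA : MeasurableSet A := measurableSet_le measurable_const (by fun_prop)
  have hperiodic : ∀ g : AddSubgroup.zmultiples (2 * π), (g +ᵥ ·) ⁻¹' A = A := by
    rintro ⟨_, n, rfl⟩
    ext θ
    change cos b ≤ cos (n • (2 * π) + θ - θ₀) ↔ cos b ≤ cos (θ - θ₀)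
    rw [zsmul_eq_mul, show n * (2 * π) + θ - θ₀ = θ - θ₀ + n * (2 * π) by ring,
      cos_add_int_mul_two_pi]
  have hshift := (isAddFundamentalDomain_Ioc two_pi_pos 0 volume).measure_set_eq
    (isAddFundamentalDomain_Ioc two_pi_pos (θ₀ - π) volume) hA hperiodic
  have harc : A ∩ Ioc (θ₀ - π) (θ₀ - π + 2 * π) = Icc (θ₀ - b) (θ₀ + b) := by
    ext θ
    simp only [A, mem_inter_iff, mem_ofPred_eq, mem_Ioc, mem_Icc]
    constructor
    · rintro ⟨hcos, h1, h2⟩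
      have := (cos_le_cos_iff_abs_le hb0 hbπ.le (abs_le.2 ⟨by linarith, by linarith⟩)).1 hcos
      constructor <;> linarith [abs_le.1 this]
    · rintro ⟨h1, h2⟩
      have hφ : |θ - θ₀| ≤ b := abs_le.2 ⟨by linarith, by linarith⟩
      exact ⟨(cos_le_cos_iff_abs_le hb0 hbπ.le (by linarith)).2 hφ, by linarith, by linarith⟩
  rw [← zero_add (2 * π), hshift, harc, volume_Icc]
  ring_nf

section CircleMeasure

variable {X : Type*} [MeasurableSpace X]

noncomputable def circleMeasure (γ : ℝ → X) : Measure X :=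
  (ENNReal.ofReal (2 * π))⁻¹ • Measure.map γ (volume.restrict (Ioc 0 (2 * π)))

variable {γ : ℝ → X}

lemma circleMeasure_apply (hγ : Measurable γ) {A : Set X} (hA : MeasurableSet A) :
    circleMeasure γ A = (ENNReal.ofReal (2 * π))⁻¹ * volume (γ ⁻¹' A ∩ Ioc 0 (2 * π)) := by
  rw [circleMeasure, Measure.smul_apply, Measure.map_apply hγ hA, Measure.restrict_apply (hγ hA),
    smul_eq_mul]

lemma circleMeasure_univ (hγ : Measurable γ) : circleMeasure γ univ = 1 := by
  rw [circleMeasure_apply hγ MeasurableSet.univ, preimage_univ, univ_inter, volume_Ioc, sub_zero,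
    ENNReal.inv_mul_cancel (ENNReal.ofReal_pos.2 two_pi_pos).ne' ENNReal.ofReal_ne_top]

lemma circleMeasure_eq_zero (hγ : Measurable γ) {A : Set X} (hA : MeasurableSet A)
    (h : ∀ θ ∈ Ioc 0 (2 * π), γ θ ∉ A) : circleMeasure γ A = 0 := by
  rw [circleMeasure_apply hγ hA, show γ ⁻¹' A ∩ Ioc 0 (2 * π) = ∅ from
      eq_empty_of_forall_notMem fun θ hθ => h θ hθ.2 hθ.1,
    measure_empty, mul_zero]

end CircleMeasure

section Circle

variable {E : Type*} [NormedAddCommGroup E] [InnerProductSpace ℝ E]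

noncomputable def circleParam (c u v : E) (θ : ℝ) : E := c + cos θ • u + sin θ • v

lemma continuous_circleParam (c u v : E) : Continuous (circleParam c u v) := by
  unfold circleParam; fun_prop

lemma isCompact_iUnion_image_circleParam {ι : Type*} [Finite ι] (c u v : ι → E) :
    IsCompact (⋃ i, circleParam (c i) (u i) (v i) '' Icc 0 (2 * π)) :=
  isCompact_iUnion fun _ => isCompact_Icc.image (continuous_circleParam _ _ _)

variable {c u v : E}

lemma dist_circleParam (hu : ‖u‖ = 1) (hv : ‖v‖ = 1) (huv : inner ℝ u v = 0) (θ θ' : ℝ) :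
    dist (circleParam c u v θ) (circleParam c u v θ') = 2 * |sin ((θ - θ') / 2)| := by
  have hdiff : circleParam c u v θ - circleParam c u v θ'
      = (cos θ - cos θ') • u + (sin θ - sin θ') • v := by
    unfold circleParam; module
  have hsq : ‖circleParam c u v θ - circleParam c u v θ'‖ ^ 2
      = (2 * |sin ((θ - θ') / 2)|) ^ 2 := by
    rw [hdiff, norm_add_sq_real, norm_smul, norm_smul, real_inner_smul_left, real_inner_smul_right,
      huv, hu, hv]
    simp only [Real.norm_eq_abs, mul_pow, sq_abs]
    have hhalf := sin_sq_eq_half_sub ((θ - θ') / 2)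
    rw [show 2 * ((θ - θ') / 2) = θ - θ' by ring, cos_sub] at hhalf
    linear_combination (-4) * hhalf + sin_sq_add_cos_sq θ + sin_sq_add_cos_sq θ'
  rw [dist_eq_norm]
  exact (pow_left_inj₀ (norm_nonneg _) (by positivity) two_ne_zero).1 hsq

lemma circleParam_preimage_closedBall (hu : ‖u‖ = 1) (hv : ‖v‖ = 1) (huv : inner ℝ u v = 0)
    (θ₀ : ℝ) {s : ℝ} (hs0 : 0 ≤ s) (hs2 : s ≤ 2) :
    circleParam c u v ⁻¹' closedBall (circleParam c u v θ₀) s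
      = {θ | cos (2 * arcsin (s / 2)) ≤ cos (θ - θ₀)} := by
  have hcos : cos (2 * arcsin (s / 2)) = 1 - s ^ 2 / 2 := by
    rw [cos_two_mul, cos_sq', sin_arcsin (by linarith) (by linarith)]; ring
  ext θ
  have hhalf := sin_sq_eq_half_sub ((θ - θ₀) / 2)
  rw [show 2 * ((θ - θ₀) / 2) = θ - θ₀ by ring] at hhalf
  simp only [mem_preimage, mem_closedBall, dist_circleParam hu hv huv, mem_ofPred_eq, hcos]
  rw [← pow_le_pow_iff_left₀ (by positivity) hs0 two_ne_zero, mul_pow, sq_abs, hhalf]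
  constructor <;> intro <;> linarith

variable [MeasurableSpace E] [BorelSpace E]

/-- `Real.arcsin` is `π / 2` beyond `1`, so this also covers the radii `s ≥ 2`, at which the ball
contains the whole circle. -/
lemma circleMeasure_closedBall (hu : ‖u‖ = 1) (hv : ‖v‖ = 1) (huv : inner ℝ u v = 0)
    (θ₀ : ℝ) {s : ℝ} (hs : 0 ≤ s) :
    circleMeasure (circleParam c u v) (closedBall (circleParam c u v θ₀) s)
      = ENNReal.ofReal (2 * arcsin (s / 2) / π) := by
  rcases lt_or_ge s 2 with hs2 | hs2
  · have hb0 : 0 ≤ 2 * arcsin (s / 2) := by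
      linarith [arcsin_nonneg.2 (div_nonneg hs zero_le_two)]
    have hbπ : 2 * arcsin (s / 2) < π := by
      linarith [arcsin_lt_pi_div_two.2 (show s / 2 < 1 by linarith)]
    rw [circleMeasure_apply (continuous_circleParam c u v).measurable measurableSet_closedBall,
      circleParam_preimage_closedBall hu hv huv θ₀ hs hs2.le,
      volume_cos_le_cos_sub_inter_Ioc θ₀ hb0 hbπ, ← ENNReal.ofReal_inv_of_pos two_pi_pos,
      ← ENNReal.ofReal_mul (by positivity)]
    congr 1
    field_simp
  · have hpre : circleParam c u v ⁻¹' closedBall (circleParam c u v θ₀) s = univ :=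
      eq_univ_of_forall fun θ => by
        rw [mem_preimage, mem_closedBall, dist_circleParam hu hv huv]
        linarith [abs_sin_le_one ((θ - θ₀) / 2)]
    have hγ := (continuous_circleParam c u v).measurable
    rw [circleMeasure_apply hγ measurableSet_closedBall, hpre, ← preimage_univ,
      ← circleMeasure_apply hγ MeasurableSet.univ, circleMeasure_univ hγ,
      arcsin_of_one_le (by linarith), mul_div_cancel₀ _ two_ne_zero, div_self pi_ne_zero,
      ENNReal.ofReal_one]

end Circle

section Mixture

variable {E : Type*} [NormedAddCommGroup E] [InnerProductSpace ℝ E] [MeasurableSpace E]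
  {ι : Type*} [Fintype ι]

noncomputable def circleMixture (w : ι → ℝ) (c u v : ι → E) : Measure E :=
  ∑ i, ENNReal.ofReal (w i) • circleMeasure (circleParam (c i) (u i) (v i))

variable {w : ι → ℝ} {c u v : ι → E}

lemma circleMixture_apply (A : Set E) : circleMixture w c u v A
    = ∑ i, ENNReal.ofReal (w i) * circleMeasure (circleParam (c i) (u i) (v i)) A := by
  simp only [circleMixture, Measure.finsetSum_apply, Measure.smul_apply, smul_eq_mul]

variable [BorelSpace E]

instance : IsFiniteMeasure (circleMixture w c u v) where
  measure_univ_lt_top := by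
    simp only [circleMixture_apply, circleMeasure_univ (continuous_circleParam _ _ _).measurable,
      mul_one]
    exact ENNReal.sum_lt_top.2 fun _ _ => ENNReal.ofReal_lt_top

lemma circleMixture_compl_eq_zero :
    circleMixture w c u v (⋃ i, circleParam (c i) (u i) (v i) '' Icc 0 (2 * π))ᶜ = 0 := by
  rw [circleMixture_apply]
  refine Finset.sum_eq_zero fun i _ => ?_
  rw [circleMeasure_eq_zero (continuous_circleParam _ _ _).measurable
    (isCompact_iUnion_image_circleParam c u v).isClosed.isOpen_compl.measurableSet
    fun θ hθ hθK => hθK (mem_iUnion_of_mem i (mem_image_of_mem _ (Ioc_subset_Icc_self hθ))),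
    mul_zero]

lemma mul_le_circleMixture_closedBall (hu : ∀ i, ‖u i‖ = 1) (hv : ∀ i, ‖v i‖ = 1)
    (huv : ∀ i, inner ℝ (u i) (v i) = 0) (hw : ∀ i, 0 ≤ w i) (i : ι) (θ₀ : ℝ) {s : ℝ}
    (hs : 0 ≤ s) :
    w i * (2 * arcsin (s / 2) / π)
      ≤ (circleMixture w c u v (closedBall (circleParam (c i) (u i) (v i) θ₀) s)).toReal := by
  refine (ENNReal.ofReal_le_iff_le_toReal (measure_ne_top _ _)).1 ?_
  rw [circleMixture_apply, ENNReal.ofReal_mul (hw i),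
    ← circleMeasure_closedBall (c := c i) (hu i) (hv i) (huv i) θ₀ hs]
  exact Finset.single_le_sum (fun _ _ => zero_le (α := ℝ≥0∞)) (Finset.mem_univ i)

lemma circleMixture_closedBall_toReal (hu : ∀ i, ‖u i‖ = 1) (hv : ∀ i, ‖v i‖ = 1)
    (huv : ∀ i, inner ℝ (u i) (v i) = 0)
    (hsep : ∀ i j θ θ', i ≠ j → 3 ≤ dist (circleParam (c i) (u i) (v i) θ)
      (circleParam (c j) (u j) (v j) θ'))
    (hw : ∀ i, 0 ≤ w i) (i : ι) (θ₀ : ℝ) {s : ℝ} (hs0 : 0 ≤ s) (hs3 : s < 3) :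
    (circleMixture w c u v (closedBall (circleParam (c i) (u i) (v i) θ₀) s)).toReal
      = w i * (2 * arcsin (s / 2) / π) := by
  have hother : ∀ j ≠ i, circleMeasure (circleParam (c j) (u j) (v j))
      (closedBall (circleParam (c i) (u i) (v i) θ₀) s) = 0 := fun j hj =>
    circleMeasure_eq_zero (continuous_circleParam _ _ _).measurable measurableSet_closedBall
      fun θ _ hθ => by linarith [mem_closedBall.1 hθ, hsep j i θ θ₀ hj]
  rw [circleMixture_apply, Finset.sum_eq_single_of_mem i (Finset.mem_univ i)
      fun j _ hj => by rw [hother j hj, mul_zero],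
    circleMeasure_closedBall (hu i) (hv i) (huv i) θ₀ hs0,
    ENNReal.toReal_mul, ENNReal.toReal_ofReal (hw i),
    ENNReal.toReal_ofReal (by positivity [arcsin_nonneg.2 (div_nonneg hs0 zero_le_two)])]

end Mixture

section Regularity

variable {d : ℕ}

lemma mem_of_mem_msupport {μ : Measure (EuclideanSpace ℝ (Fin d))}
    {K : Set (EuclideanSpace ℝ (Fin d))} (hK : IsClosed K) (hμ : μ Kᶜ = 0)
    {x : EuclideanSpace ℝ (Fin d)} (hx : x ∈ msupport μ) : x ∈ K := by
  by_contra hxK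
  obtain ⟨r, hr, hball⟩ := isOpen_iff.1 hK.isOpen_compl x hxK
  exact (hx r hr).ne' (measure_mono_null hball hμ)

variable {ι : Type*} [Fintype ι] {w : ι → ℝ} {c u v : ι → EuclideanSpace ℝ (Fin d)}

lemma exists_eq_circleParam_of_mem_msupport {x : EuclideanSpace ℝ (Fin d)}
    (hx : x ∈ msupport (circleMixture w c u v)) :
    ∃ i θ, x = circleParam (c i) (u i) (v i) θ := by
  obtain ⟨i, θ, -, rfl⟩ := mem_iUnion.1 (mem_of_mem_msupport
    (isCompact_iUnion_image_circleParam c u v).isClosed circleMixture_compl_eq_zero hx)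
  exact ⟨i, θ, rfl⟩

lemma circleParam_mem_msupport (hu : ∀ i, ‖u i‖ = 1) (hv : ∀ i, ‖v i‖ = 1)
    (huv : ∀ i, inner ℝ (u i) (v i) = 0) (hw : ∀ i, 0 < w i) (i : ι) (θ : ℝ) :
    circleParam (c i) (u i) (v i) θ ∈ msupport (circleMixture w c u v) := by
  intro r hr
  have hpos : 0 < w i * (2 * arcsin (r / 2 / 2) / π) := by
    have := arcsin_pos.2 (show 0 < r / 2 / 2 by positivity)
    have := hw i
    positivity
  have hle := (mul_le_circleMixture_closedBall (c := c) hu hv huv (fun j => (hw j).le) i θ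
    (half_pos hr).le).trans_lt' hpos
  exact (ENNReal.toReal_pos_iff.1 hle).1.trans_le
    (measure_mono (closedBall_subset_ball (half_lt_self hr)))

lemma validReg_circleMixture (hu : ∀ i, ‖u i‖ = 1) (hv : ∀ i, ‖v i‖ = 1)
    (huv : ∀ i, inner ℝ (u i) (v i) = 0)
    (hsep : ∀ i j θ θ', i ≠ j → 3 ≤ dist (circleParam (c i) (u i) (v i) θ)
      (circleParam (c j) (u j) (v j) θ'))
    {wmin τ ε C : ℝ} (hwmin : 0 < wmin) (hw : ∀ i, wmin ≤ w i) (hτ0 : 0 ≤ τ) (hτ1 : τ < 1)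
    (harcsin : ∀ t ∈ Icc 0 τ, arcsin t ≤ (1 + ε / 3) * t) (hC0 : 0 < C) (hC1 : C ≤ 1)
    (hC : C ≤ wmin * (2 * arcsin τ / π)) : ValidReg (circleMixture w c u v) 1 ε C := by
  refine ⟨hC0, hC1, fun x hx s r hs hsr hr => ?_⟩
  obtain ⟨i, θ₀, rfl⟩ := exists_eq_circleParam_of_mem_msupport hx
  have hw0 : ∀ j, 0 ≤ w j := fun j => hwmin.le.trans (hw j)
  have hrτ : r / 2 ≤ τ := by
    by_contra! hτr
    have harc : arcsin τ < arcsin (r / 2) :=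
      (arcsin_lt_arcsin (by linarith) (lt_min hτr hτ1) (min_le_right _ _)).trans_le
        (arcsin_le_arcsin (min_le_left _ _))
    have hmass := mul_le_circleMixture_closedBall (c := c) hu hv huv hw0 i θ₀ (hs.trans hsr).le
    have hlt : wmin * (2 * arcsin τ / π) < wmin * (2 * arcsin (r / 2) / π) := by gcongr
    have hle : wmin * (2 * arcsin (r / 2) / π) ≤ w i * (2 * arcsin (r / 2) / π) :=
      mul_le_mul_of_nonneg_right (hw i)
        (by positivity [arcsin_nonneg.2 (show 0 ≤ r / 2 by linarith)])
    linarith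
  have hwi : w i ≠ 0 := (hwmin.trans_le (hw i)).ne'
  rw [circleMixture_closedBall_toReal hu hv huv hsep hw0 i θ₀ (hs.trans hsr).le (by linarith),
    circleMixture_closedBall_toReal hu hv huv hsep hw0 i θ₀ hs.le (by linarith),
    mul_div_mul_left _ _ hwi, div_div_div_cancel_right₀ pi_ne_zero,
    mul_div_mul_left _ _ two_ne_zero, pow_one, ← div_div_div_cancel_right₀ two_ne_zero r s]
  exact arcsin_div_arcsin_mem_Icc (half_pos hs) (by linarith) hrτ hτ1.le harcsin

lemma lt_of_validReg_circleMixture (hu : ∀ i, ‖u i‖ = 1) (hv : ∀ i, ‖v i‖ = 1)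
    (huv : ∀ i, inner ℝ (u i) (v i) = 0)
    (hsep : ∀ i j θ θ', i ≠ j → 3 ≤ dist (circleParam (c i) (u i) (v i) θ)
      (circleParam (c j) (u j) (v j) θ'))
    (hw : ∀ i, 0 < w i) {ε C : ℝ} (hε0 : 0 ≤ ε) (hε : ε < 3 / 4)
    (hC : ValidReg (circleMixture w c u v) 1 ε C) (i : ι) : C < w i := by
  by_contra! hCw
  have hfull : ∀ s ∈ Ico (2 : ℝ) 3,
      (circleMixture w c u v (closedBall (circleParam (c i) (u i) (v i) 0) s)).toReal = w i := by
    rintro s ⟨hs2, hs3⟩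
    rw [circleMixture_closedBall_toReal hu hv huv hsep (fun j => (hw j).le) i 0 (by linarith)
      hs3, arcsin_of_one_le (by linarith), mul_div_cancel₀ _ two_ne_zero, div_self pi_ne_zero,
      mul_one]
  have h := (hC.2.2 _ (circleParam_mem_msupport hu hv huv hw i 0) 2 (5 / 2) two_pos
    (by norm_num) (by rw [hfull _ ⟨by norm_num, by norm_num⟩]; exact hCw)).1
  rw [hfull _ ⟨by norm_num, by norm_num⟩, hfull _ ⟨le_rfl, by norm_num⟩, div_self (hw i).ne',
    pow_one, inv_mul_le_iff₀ (by linarith)] at h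
  linarith

end Regularity

theorem pT_is_one_regular_general (d κ : ℕ) (hκ : 0 < κ)
    (T : Finset (Fin (2 * κ)))
    (c u v : Fin (2 * κ) → EuclideanSpace ℝ (Fin d))
    (hu : ∀ i, ‖u i‖ = 1) (hv : ∀ i, ‖v i‖ = 1) (huv : ∀ i, (inner ℝ (u i) (v i) : ℝ) = 0)
    (circ : Fin (2 * κ) → ℝ → EuclideanSpace ℝ (Fin d))
    (hcirc : ∀ i θ, circ i θ = c i + Real.cos θ • u i + Real.sin θ • v i)
    (hsep : ∀ i j θ θ', i ≠ j → 3 ≤ dist (circ i θ) (circ j θ'))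
    (pT : Measure (EuclideanSpace ℝ (Fin d)))
    (hpT : pT = ∑ i : Fin (2 * κ),
      (ENNReal.ofReal (if i ∈ T then (1 : ℝ) / (3 * κ) else 2 / (3 * κ))) •
        ((ENNReal.ofReal (2 * Real.pi))⁻¹ •
          Measure.map (circ i) (volume.restrict (Set.Ioc 0 (2 * Real.pi))))) :
    (∀ ε : ℝ, 0 < ε → ∃ ce : ℝ, ValidReg pT 1 ε ce) ∧
    ValidReg pT 1 (1 / 3) (1 / (9 * κ)) ∧
    (∀ ce : ℝ, ValidReg pT 1 (1 / 3) ce → ce ≤ 2 / (3 * κ)) := by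
  obtain rfl : circ = fun i => circleParam (c i) (u i) (v i) := funext fun i => funext (hcirc i)
  set w : Fin (2 * κ) → ℝ := fun i => if i ∈ T then 1 / (3 * κ) else 2 / (3 * κ)
  obtain rfl : pT = circleMixture w c u v := hpT
  have hκ' : (1 : ℝ) ≤ κ := Nat.one_le_cast.2 hκ
  have hw_lb : ∀ i, 1 / (3 * κ) ≤ w i := fun i => by
    dsimp only [w]; split_ifs <;> gcongr; norm_num
  have hw_ub : ∀ i, w i ≤ 2 / (3 * κ) := fun i => by
    dsimp only [w]; split_ifs <;> gcongr; norm_num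
  have hwmin : (0 : ℝ) < 1 / (3 * κ) := by positivity
  have hwmin1 : 1 / (3 * κ) ≤ (1 : ℝ) := by rw [div_le_one (by positivity)]; linarith
  refine ⟨fun ε hε => ?_, ?_, fun C hC => ?_⟩
  · obtain ⟨τ, hτ0, hτ1, hτ⟩ := exists_forall_arcsin_le_mul (by linarith : 1 < 1 + ε / 3)
    have harc : 2 * arcsin τ / π ≤ 1 := by
      rw [div_le_one pi_pos]; linarith [arcsin_le_pi_div_two τ]
    exact ⟨_, validReg_circleMixture hu hv huv hsep hwmin hw_lb hτ0.le hτ1 hτ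
      (by positivity [arcsin_pos.2 hτ0]) ((mul_le_of_le_one_right hwmin.le harc).trans hwmin1)
      le_rfl⟩
  · have harcsin : arcsin (1 / 2) = π / 6 := by
      rw [← sin_pi_div_six, arcsin_sin] <;> linarith [pi_pos]
    refine validReg_circleMixture (τ := 1 / 2) hu hv huv hsep hwmin hw_lb (by norm_num)
      (by norm_num) (fun t ht => arcsin_le_mul ht.1 (by norm_num) (by nlinarith [ht.2])
        (by nlinarith [ht.1, ht.2])) (by positivity) ?_ ?_
    · rw [div_le_one (by positivity)]; linarith
    · rw [harcsin]; field_simp; norm_num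
  · let i₀ : Fin (2 * κ) := ⟨0, by omega⟩
    exact (lt_of_validReg_circleMixture hu hv huv hsep (fun i => hwmin.trans_le (hw_lb i))
      (by norm_num) (by norm_num) hC i₀).le.trans (hw_ub i₀)

/-- The distribution `p_T` on `2κ` well-separated unit circles (mass `1/(3κ)` on circles
indexed by `T`, `2/(3κ)` on the others, uniform on each circle) is `1`-regular, and for
`ε = 1/3` its regularity constant satisfies `1/(9κ) ≤ (p_T)_ε ≤ 2/(3κ)`. -/
theorem pT_is_one_regular (d κ : ℕ) (hκ : 0 < κ)
    (T : Finset (Fin (2 * κ))) (hT : T.card = κ)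
    (c u v : Fin (2 * κ) → EuclideanSpace ℝ (Fin d))
    (hu : ∀ i, ‖u i‖ = 1) (hv : ∀ i, ‖v i‖ = 1) (huv : ∀ i, (inner ℝ (u i) (v i) : ℝ) = 0)
    (circ : Fin (2 * κ) → ℝ → EuclideanSpace ℝ (Fin d))
    (hcirc : ∀ i θ, circ i θ = c i + Real.cos θ • u i + Real.sin θ • v i)
    (hsep : ∀ i j θ θ', i ≠ j → 3 ≤ dist (circ i θ) (circ j θ'))
    (pT : Measure (EuclideanSpace ℝ (Fin d)))
    (hpT : pT = ∑ i : Fin (2 * κ),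
      (ENNReal.ofReal (if i ∈ T then (1 : ℝ) / (3 * κ) else 2 / (3 * κ))) •
        ((ENNReal.ofReal (2 * Real.pi))⁻¹ •
          Measure.map (circ i) (volume.restrict (Set.Ioc 0 (2 * Real.pi))))) :
    (∀ ε : ℝ, 0 < ε → ∃ ce : ℝ, ValidReg pT 1 ε ce) ∧
    ValidReg pT 1 (1 / 3) (1 / (9 * κ)) ∧
    (∀ ce : ℝ, ValidReg pT 1 (1 / 3) ce → ce ≤ 2 / (3 * κ)) :=
  pT_is_one_regular_general d κ hκ T c u v hu hv huv circ hcirc hsep pT hpT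
end

section
/- Let T ⊂ {1,…,2κ} with |T| = κ, and let S be a sample of κ i.i.d. points from p_T (the distribution on 2κ circles assigning mass 1/(3κ) to each circle indexed in T and 2/(3κ) to each other circle, uniform on each circle). Then with probability at least 1 − 4·exp(−κ/2048), the sets L = {i ∈ T : |C_i ∩ S| = 1} and L' = {i ∉ T : |C_i ∩ S| = 1} both have size at least κ/8. -/
/-!
Each sample point lies on exactly one circle, and circle `i` has `p_T`-mass `q i`. Hence the
event contains the disjoint union of the boxes `∏ⱼ C_{σ j}` over the labelings
`σ : Fin κ → Fin (2κ)` that hit at least `κ/8` circles of `T` and at least `κ/8` circles outside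
`T` exactly once, and it suffices to bound the total `q`-product weight of these labelings.

For `A = T` or `A = Tᶜ`, the number of circles of `A` hit exactly once changes by at most 2 when
one label changes, and by Bernoulli's inequality its mean is at least `κ · s (1 - s) = 2κ/9`,
where `s = κ q i ∈ {1/3, 2/3}` for `i ∈ A`. McDiarmid's inequality bounds the probability that it
falls below `κ/8` by `exp (-2 (7κ/72)² / (4κ)) ≤ exp (-κ/2048)`.
-/

section McDiarmid

open Finset Real MeasureTheory ProbabilityTheory

variable {α : Type*} {w : α → ℝ} {m : ℕ}

def prodWeight (w : α → ℝ) (σ : Fin m → α) : ℝ := ∏ j, w (σ j)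

lemma prodWeight_nonneg (hw0 : ∀ x, 0 ≤ w x) (σ : Fin m → α) : 0 ≤ prodWeight w σ :=
  prod_nonneg fun j _ => hw0 (σ j)

lemma sum_piFinset_prodWeight [DecidableEq α] (t : Fin m → Finset α) :
    ∑ σ ∈ Fintype.piFinset t, prodWeight w σ = ∏ j, ∑ x ∈ t j, w x :=
  (prod_univ_sum t fun _ x => w x).symm

def BoundedDifferences (c : ℝ) (f : (Fin m → α) → ℝ) : Prop :=
  ∀ σ j b, |f σ - f (Function.update σ j b)| ≤ c

variable [Fintype α]

def piMean (w : α → ℝ) (f : (Fin m → α) → ℝ) : ℝ := ∑ σ, prodWeight w σ * f σ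

lemma sum_prodWeight (hw1 : ∑ x, w x = 1) : ∑ σ : Fin m → α, prodWeight w σ = 1 := by
  classical
  simpa [hw1] using sum_piFinset_prodWeight (w := w) fun _ : Fin m => univ

lemma piMean_mono (hw0 : ∀ x, 0 ≤ w x) {f g : (Fin m → α) → ℝ} (hfg : ∀ σ, f σ ≤ g σ) :
    piMean w f ≤ piMean w g :=
  sum_le_sum fun σ _ => mul_le_mul_of_nonneg_left (hfg σ) (prodWeight_nonneg hw0 σ)

lemma piMean_const_mul (r : ℝ) (f : (Fin m → α) → ℝ) :
    piMean w (fun σ => r * f σ) = r * piMean w f := by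
  simp only [piMean, mul_sum, mul_left_comm]

lemma piMean_succ (f : (Fin (m + 1) → α) → ℝ) :
    piMean w f = piMean w fun σ => ∑ x, w x * f (Fin.cons x σ) := by
  simp only [piMean, mul_sum]
  rw [← (Fin.consEquiv fun _ => α).sum_comp, Fintype.sum_prod_type, sum_comm]
  simp [Fin.consEquiv, prodWeight, Fin.prod_univ_succ, mul_assoc, mul_left_comm]

-- Hoeffding's lemma for the law `∑ x, w x • dirac x`.
lemma sum_mul_exp_le_of_mem_Icc (hw0 : ∀ x, 0 ≤ w x) (hw1 : ∑ x, w x = 1) {Y : α → ℝ}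
    {a b : ℝ} (hY : ∀ x, Y x ∈ Set.Icc a b) (t : ℝ) :
    ∑ x, w x * exp (t * Y x) ≤ exp (t * ∑ x, w x * Y x + (b - a) ^ 2 * t ^ 2 / 8) := by
  let _ : MeasurableSpace α := ⊤
  have _ : DiscreteMeasurableSpace α := ⟨fun _ => trivial⟩
  set ν : Measure α := ∑ x, ENNReal.ofReal (w x) • Measure.dirac x
  have hint : ∀ g : α → ℝ, ∫ x, g x ∂ν = ∑ x, w x * g x := by
    intro g
    rw [integral_finsetSum_measure fun x _ =>
      (integrable_dirac (by simp)).smul_measure (by simp)]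
    simp [ENNReal.toReal_ofReal (hw0 _)]
  have _ : IsProbabilityMeasure ν :=
    ⟨by simp [ν, ← ENNReal.ofReal_sum_of_nonneg fun x _ => hw0 x, hw1]⟩
  have hoeffding := (hasSubgaussianMGF_of_mem_Icc (μ := ν)
    Measurable.of_discrete.aemeasurable (ae_of_all _ hY)).mgf_le t
  rw [mgf, hint, hint] at hoeffding
  calc ∑ x, w x * exp (t * Y x)
      = exp (t * ∑ x, w x * Y x) * ∑ x, w x * exp (t * (Y x - ∑ x, w x * Y x)) := by
        rw [mul_sum]
        congr 1 with x
        rw [mul_left_comm, ← exp_add]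
        ring_nf
    _ ≤ exp (t * ∑ x, w x * Y x) * exp ((b - a) ^ 2 * t ^ 2 / 8) := by
        gcongr
        refine hoeffding.trans_eq ?_
        norm_num [div_pow, sq_abs]
        ring_nf
    _ = _ := (exp_add _ _).symm

namespace BoundedDifferences

variable {c : ℝ} {f : (Fin (m + 1) → α) → ℝ}

lemma sum_cons (hw0 : ∀ x, 0 ≤ w x) (hw1 : ∑ x, w x = 1) (hf : BoundedDifferences c f) :
    BoundedDifferences c fun σ : Fin m → α => ∑ x, w x * f (Fin.cons x σ) := by
  intro σ j b
  calc |∑ x, w x * f (Fin.cons x σ) - ∑ x, w x * f (Fin.cons x (Function.update σ j b))|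
      = |∑ x, w x * (f (Fin.cons x σ) - f (Function.update (Fin.cons x σ) j.succ b))| := by
        simp only [Fin.cons_update, mul_sub, sum_sub_distrib]
    _ ≤ ∑ x, w x * c := by
        refine (abs_sum_le_sum_abs _ _).trans (sum_le_sum fun x _ => ?_)
        rw [abs_mul, abs_of_nonneg (hw0 x)]
        exact mul_le_mul_of_nonneg_left (hf _ _ _) (hw0 x)
    _ = c := by rw [← sum_mul, hw1, one_mul]

lemma exists_mem_Icc_cons [Nonempty α] (hf : BoundedDifferences c f) (σ : Fin m → α) :
    ∃ l, ∀ x, f (Fin.cons x σ) ∈ Set.Icc l (l + c) := by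
  obtain ⟨x₀, -, hx₀⟩ := exists_min_image univ (fun x => f (Fin.cons x σ)) univ_nonempty
  refine ⟨f (Fin.cons x₀ σ), fun x => ⟨hx₀ x (mem_univ x), ?_⟩⟩
  have h := hf (Fin.cons x σ) 0 x₀
  rw [Fin.update_cons_zero] at h
  linarith [le_abs_self (f (Fin.cons x σ) - f (Fin.cons x₀ σ))]

end BoundedDifferences

lemma piMean_exp_le (hw0 : ∀ x, 0 ≤ w x) (hw1 : ∑ x, w x = 1) {c : ℝ}
    {f : (Fin m → α) → ℝ} (hf : BoundedDifferences c f) (t : ℝ) :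
    piMean w (fun σ => exp (t * f σ)) ≤ exp (t * piMean w f + m * c ^ 2 * t ^ 2 / 8) := by
  have : Nonempty α := by
    by_contra h
    simp [not_nonempty_iff.1 h] at hw1
  induction m with
  | zero => simp [piMean, prodWeight]
  | succ m ih =>
    set g : (Fin m → α) → ℝ := fun σ => ∑ x, w x * f (Fin.cons x σ)
    calc piMean w (fun σ => exp (t * f σ))
        = piMean w fun σ => ∑ x, w x * exp (t * f (Fin.cons x σ)) := piMean_succ _
      _ ≤ piMean w fun σ => exp (c ^ 2 * t ^ 2 / 8) * exp (t * g σ) := piMean_mono hw0 fun σ => by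
          obtain ⟨l, hl⟩ := hf.exists_mem_Icc_cons σ
          rw [← exp_add]
          refine (sum_mul_exp_le_of_mem_Icc hw0 hw1 hl t).trans_eq ?_
          simp only [g]
          ring_nf
      _ = exp (c ^ 2 * t ^ 2 / 8) * piMean w fun σ => exp (t * g σ) := piMean_const_mul _ _
      _ ≤ exp (c ^ 2 * t ^ 2 / 8) * exp (t * piMean w g + m * c ^ 2 * t ^ 2 / 8) := by
          gcongr
          exact ih (hf.sum_cons hw0 hw1)
      _ = exp (t * piMean w f + (m + 1 : ℕ) * c ^ 2 * t ^ 2 / 8) := by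
          rw [← exp_add, ← piMean_succ]
          push_cast
          ring_nf

lemma sum_prodWeight_filter_le (hw0 : ∀ x, 0 ≤ w x) (f : (Fin m → α) → ℝ) (a : ℝ) {t : ℝ}
    (ht : 0 ≤ t) :
    ∑ σ with f σ ≤ a, prodWeight w σ ≤ piMean w fun σ => exp (t * (a - f σ)) := by
  rw [piMean, sum_filter]
  gcongr with σ
  split_ifs with h
  · exact le_mul_of_one_le_right (prodWeight_nonneg hw0 σ)
      (one_le_exp (mul_nonneg ht (sub_nonneg.2 h)))
  · exact mul_nonneg (prodWeight_nonneg hw0 σ) (exp_nonneg _)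

-- McDiarmid's inequality (lower tail), via the Chernoff bound at `t = 4 s / (m c²)`.
theorem sum_prodWeight_le_piMean_sub_le (hw0 : ∀ x, 0 ≤ w x) (hw1 : ∑ x, w x = 1) {c : ℝ}
    {f : (Fin m → α) → ℝ} (hf : BoundedDifferences c f) {s : ℝ} (hs : 0 ≤ s) :
    ∑ σ with f σ ≤ piMean w f - s, prodWeight w σ ≤ exp (-2 * s ^ 2 / (m * c ^ 2)) := by
  set K : ℝ := m * c ^ 2
  have hK : 0 ≤ K := by positivity
  set t := 4 * s / K
  calc _ ≤ piMean w fun σ => exp (t * (piMean w f - s - f σ)) :=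
        sum_prodWeight_filter_le hw0 f _ (by positivity)
    _ = exp (t * (piMean w f - s)) * piMean w fun σ => exp (-t * f σ) := by
        rw [← piMean_const_mul]
        congr with σ
        rw [← exp_add]
        ring_nf
    _ ≤ exp (t * (piMean w f - s)) * exp (-t * piMean w f + K * (-t) ^ 2 / 8) := by
        gcongr
        exact piMean_exp_le hw0 hw1 hf (-t)
    _ = exp (-2 * s ^ 2 / K) := by
        rw [← exp_add]
        congr 1
        rcases hK.eq_or_lt with hK0 | hKpos
        · simp [t, ← hK0]
        · simp only [t]
          field_simp
          ring

lemma one_sub_sum_sub_sum_le_sum_prodWeight_and (hw0 : ∀ x, 0 ≤ w x) (hw1 : ∑ x, w x = 1)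
    (P Q : (Fin m → α) → Prop) [DecidablePred P] [DecidablePred Q] :
    1 - ∑ σ with ¬P σ, prodWeight w σ - ∑ σ with ¬Q σ, prodWeight w σ ≤
      ∑ σ with P σ ∧ Q σ, prodWeight w σ := by
  rw [← sum_prodWeight (m := m) hw1]
  simp only [sum_filter, ← sum_sub_distrib]
  gcongr with σ
  have := prodWeight_nonneg hw0 σ
  split_ifs <;> simp_all

end McDiarmid

section Singletons

open Finset

variable {α : Type*} [DecidableEq α] {m : ℕ}

def singletons (A : Finset α) (σ : Fin m → α) : Finset α := {i ∈ A | #{j | σ j = i} = 1}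

lemma singletons_subset_union_update (A : Finset α) (σ : Fin m → α) (j : Fin m) (b : α) :
    singletons A σ ⊆ singletons A (Function.update σ j b) ∪ {σ j, b} := by
  intro i hi
  rw [mem_union, or_iff_not_imp_right]
  intro hib
  simp only [mem_insert, mem_singleton, not_or] at hib
  have hfiber : (univ.filter fun j' => Function.update σ j b j' = i) =
      univ.filter fun j' => σ j' = i := by
    ext j'
    by_cases h : j' = j
    · subst h
      simp [Ne.symm hib.1, Ne.symm hib.2]
    · simp [Function.update_of_ne h]
  simp only [singletons, mem_filter] at hi ⊢
  rw [hfiber]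
  exact hi

lemma ncard_setOf_mem_and_ncard_eq_one (A : Finset α) (σ : Fin m → α) :
    {i | i ∈ A ∧ {j | σ j = i}.ncard = 1}.ncard = #(singletons A σ) := by
  rw [← Set.ncard_coe_finset]
  congr 1
  ext i
  simp [singletons, Set.ncard_eq_toFinset_card']

lemma boundedDifferences_card_singletons (A : Finset α) :
    BoundedDifferences 2 fun σ : Fin m → α => (#(singletons A σ) : ℝ) := by
  have hle : ∀ (σ : Fin m → α) j b,
      #(singletons A σ) ≤ #(singletons A (Function.update σ j b)) + 2 := fun σ j b =>
    (card_le_card (singletons_subset_union_update A σ j b)).trans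
      ((card_union_le _ _).trans (Nat.add_le_add_left card_le_two _))
  intro σ j b
  have h₁ := hle σ j b
  have h₂ := hle (Function.update σ j b) j (σ j)
  rw [Function.update_idem, Function.update_eq_self] at h₂
  have h₁' : (#(singletons A σ) : ℝ) ≤ #(singletons A (Function.update σ j b)) + 2 := by
    exact_mod_cast h₁
  have h₂' : (#(singletons A (Function.update σ j b)) : ℝ) ≤ #(singletons A σ) + 2 := by
    exact_mod_cast h₂
  exact abs_sub_le_iff.2 ⟨by linarith, by linarith⟩

variable [Fintype α]

lemma mul_mul_pow_le_sum_prodWeight {w : α → ℝ} (hw0 : ∀ x, 0 ≤ w x) (hw1 : ∑ x, w x = 1)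
    (i : α) :
    m * w i * (1 - w i) ^ (m - 1) ≤ ∑ σ : Fin m → α with #{j | σ j = i} = 1, prodWeight w σ := by
  set t : Fin m → Fin m → Finset α := fun j j' => if j' = j then {i} else univ.erase i
  have hmem : ∀ j σ, σ ∈ Fintype.piFinset (t j) ↔ ∀ j', σ j' = i ↔ j' = j := by
    intro j σ
    simp only [Fintype.mem_piFinset, t]
    refine forall_congr' fun j' => ?_
    split_ifs with h <;> simp [h]
  have hsum : ∀ j, ∑ σ ∈ Fintype.piFinset (t j), prodWeight w σ = w i * (1 - w i) ^ (m - 1) := by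
    intro j
    rw [sum_piFinset_prodWeight, ← mul_prod_erase univ _ (mem_univ j)]
    simp only [t, if_pos, sum_singleton]
    congr 1
    rw [prod_congr rfl fun j' hj' => by
        rw [if_neg (ne_of_mem_erase hj'), sum_erase_eq_sub (mem_univ i), hw1],
      prod_const, card_erase_of_mem (mem_univ j), card_univ, Fintype.card_fin]
  have hdisj : ((univ : Finset (Fin m)) : Set (Fin m)).PairwiseDisjoint
      fun j => Fintype.piFinset (t j) := by
    intro j _ j' _ hne
    refine disjoint_left.2 fun σ hσ hσ' => hne ?_
    rw [hmem] at hσ hσ'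
    exact ((hσ' j).1 ((hσ j).2 rfl))
  calc m * w i * (1 - w i) ^ (m - 1)
      = ∑ j : Fin m, ∑ σ ∈ Fintype.piFinset (t j), prodWeight w σ := by
        simp [hsum, mul_assoc]
    _ = ∑ σ ∈ univ.biUnion fun j => Fintype.piFinset (t j), prodWeight w σ :=
        (sum_biUnion hdisj).symm
    _ ≤ _ := by
        refine sum_le_sum_of_subset_of_nonneg (fun σ hσ => ?_) fun σ _ _ => prodWeight_nonneg hw0 σ
        obtain ⟨j, -, hj⟩ := mem_biUnion.1 hσ
        rw [hmem] at hj
        simp [hj, filter_eq']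

lemma piMean_card_singletons (w : α → ℝ) (A : Finset α) :
    piMean w (fun σ : Fin m → α => (#(singletons A σ) : ℝ)) =
      ∑ i ∈ A, ∑ σ : Fin m → α with #{j | σ j = i} = 1, prodWeight w σ := by
  simp only [piMean, singletons, card_filter, Nat.cast_sum, mul_sum]
  rw [sum_comm]
  simp [sum_filter]

lemma one_sub_mul_le_pow_pred {p : ℝ} (hp : 0 ≤ p) (hmp : m * p ≤ 1) :
    1 - m * p ≤ (1 - p) ^ (m - 1) := by
  cases m with
  | zero => simp
  | succ n =>
    push_cast at hmp ⊢
    have := one_add_mul_le_pow (a := -p) (by nlinarith) n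
    simp only [← sub_eq_add_neg] at this ⊢
    nlinarith

lemma le_piMean_card_singletons {w : α → ℝ} (hw0 : ∀ x, 0 ≤ w x) (hw1 : ∑ x, w x = 1)
    {A : Finset α} {p : ℝ} (hA : ∀ i ∈ A, w i = p) (hp : 0 ≤ p) (hmp : m * p ≤ 1) :
    #A * (m * p * (1 - m * p)) ≤ piMean w fun σ : Fin m → α => (#(singletons A σ) : ℝ) := by
  rw [piMean_card_singletons, ← nsmul_eq_mul, ← sum_const]
  refine sum_le_sum fun i hi => ?_
  calc m * p * (1 - m * p) ≤ m * p * (1 - p) ^ (m - 1) := by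
        gcongr
        exact one_sub_mul_le_pow_pred hp hmp
    _ = m * w i * (1 - w i) ^ (m - 1) := by rw [hA i hi]
    _ ≤ _ := mul_mul_pow_le_sum_prodWeight hw0 hw1 i

end Singletons

section Cover

open Finset Real

variable {ι : Type*} [DecidableEq ι]

-- `coverWeight κ T i = p_T(C_i)`.
noncomputable def coverWeight (κ : ℕ) (T : Finset ι) (i : ι) : ℝ :=
  if i ∈ T then 1 / (3 * κ) else 2 / (3 * κ)

variable {κ : ℕ} {T : Finset ι}

lemma coverWeight_nonneg (i : ι) : 0 ≤ coverWeight κ T i := by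
  unfold coverWeight
  split_ifs <;> positivity

variable [Fintype ι]

lemma sum_coverWeight (hκ : 0 < κ) (hT : #T = κ) (hTc : #Tᶜ = κ) :
    ∑ i, coverWeight κ T i = 1 := by
  simp only [coverWeight]
  rw [← sum_add_sum_compl T, sum_congr rfl fun i hi => if_pos hi,
    sum_congr rfl fun i hi => if_neg (mem_compl.1 hi)]
  simp only [sum_const, hT, hTc, nsmul_eq_mul]
  field_simp
  norm_num

lemma two_mul_div_nine_le_piMean (hκ : 0 < κ) (hT : #T = κ) (hTc : #Tᶜ = κ) {A : Finset ι}
    (hA : A = T ∨ A = Tᶜ) :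
    2 * κ / 9 ≤ piMean (coverWeight κ T) fun σ : Fin κ → ι => (#(singletons A σ) : ℝ) := by
  have hw1 := sum_coverWeight hκ hT hTc
  have hκ' : (κ : ℝ) ≠ 0 := by positivity
  rcases hA with rfl | rfl
  · refine le_of_eq_of_le ?_ (le_piMean_card_singletons coverWeight_nonneg hw1
      (fun i hi => if_pos hi) (by positivity) (by field_simp; norm_num))
    rw [hT]
    field_simp
    norm_num
  · refine le_of_eq_of_le ?_ (le_piMean_card_singletons coverWeight_nonneg hw1
      (fun i hi => if_neg (mem_compl.1 hi)) (by positivity) (by field_simp; norm_num))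
    rw [hTc]
    field_simp
    norm_num

lemma sum_prodWeight_card_singletons_lt_le (hκ : 0 < κ) (hT : #T = κ) (hTc : #Tᶜ = κ)
    {A : Finset ι} (hA : A = T ∨ A = Tᶜ) :
    ∑ σ : Fin κ → ι with (#(singletons A σ) : ℝ) < κ / 8, prodWeight (coverWeight κ T) σ ≤
      exp (-κ / 2048) := by
  have hE := two_mul_div_nine_le_piMean hκ hT hTc hA
  set f := fun σ : Fin κ → ι => (#(singletons A σ) : ℝ)
  set s := piMean (coverWeight κ T) f - κ / 8 with hs_def
  have hs : 7 * κ / 72 ≤ s := by linarith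
  have hκ' : (0 : ℝ) < κ := by exact_mod_cast hκ
  calc _ ≤ ∑ σ with f σ ≤ piMean (coverWeight κ T) f - s, prodWeight (coverWeight κ T) σ := by
        refine sum_le_sum_of_subset_of_nonneg (fun σ => ?_) fun σ _ _ =>
          prodWeight_nonneg coverWeight_nonneg σ
        simp only [mem_filter, mem_univ, true_and, s, sub_sub_cancel]
        exact le_of_lt
    _ ≤ exp (-2 * s ^ 2 / (κ * 2 ^ 2)) :=
        sum_prodWeight_le_piMean_sub_le coverWeight_nonneg (sum_coverWeight hκ hT hTc)
          (boundedDifferences_card_singletons A) (by linarith)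
    _ ≤ exp (-κ / 2048) := by
        rw [exp_le_exp, div_le_div_iff₀ (by positivity) (by norm_num)]
        nlinarith

theorem one_sub_two_mul_exp_le_sum_prodWeight_coverWeight (hκ : 0 < κ) (hT : #T = κ)
    (hTc : #Tᶜ = κ) :
    1 - 2 * exp (-κ / 2048) ≤
      ∑ σ : Fin κ → ι with κ / 8 ≤ (#(singletons T σ) : ℝ) ∧ κ / 8 ≤ (#(singletons Tᶜ σ) : ℝ),
        prodWeight (coverWeight κ T) σ := by
  refine le_trans ?_ (one_sub_sum_sub_sum_le_sum_prodWeight_and coverWeight_nonneg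
    (sum_coverWeight hκ hT hTc) _ _)
  simp only [not_le]
  linarith [sum_prodWeight_card_singletons_lt_le hκ hT hTc (Or.inl rfl),
    sum_prodWeight_card_singletons_lt_le hκ hT hTc (Or.inr rfl)]

end Cover

section Measure

open Function MeasureTheory Real

variable {X ι : Type*} {m : ℕ}

lemma setOf_mem_eq_of_mem_pi {R : ι → Set X} (hdisj : Pairwise (Disjoint on R))
    {σ : Fin m → ι} {f : Fin m → X} (hf : f ∈ Set.univ.pi fun j => R (σ j)) (i : ι) :
    {j | f j ∈ R i} = {j | σ j = i} := by
  ext j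
  refine ⟨fun h => by_contra fun hne => Set.disjoint_left.1 (hdisj hne) (hf j trivial) h,
    fun h => h ▸ hf j trivial⟩

variable [MeasurableSpace X]

lemma ofReal_sum_prodWeight_le_pi {ν : Measure X} [SigmaFinite ν] {R : ι → Set X}
    (hR : ∀ i, MeasurableSet (R i)) (hdisj : Pairwise (Disjoint on R)) {q : ι → ℝ}
    (hq : ∀ i, 0 ≤ q i) (hν : ∀ i, ENNReal.ofReal (q i) ≤ ν (R i)) (G : Finset (Fin m → ι))
    {E : Set (Fin m → X)} (hE : ∀ σ ∈ G, Set.univ.pi (fun j => R (σ j)) ⊆ E) :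
    ENNReal.ofReal (∑ σ ∈ G, prodWeight q σ) ≤ Measure.pi (fun _ => ν) E := by
  have hboxes : (G : Set (Fin m → ι)).PairwiseDisjoint fun σ => Set.univ.pi fun j => R (σ j) := by
    intro σ _ τ _ hne
    obtain ⟨j, hj⟩ := Function.ne_iff.1 hne
    exact Set.disjoint_left.2 fun f hσ hτ =>
      Set.disjoint_left.1 (hdisj hj) (hσ j trivial) (hτ j trivial)
  calc ENNReal.ofReal (∑ σ ∈ G, prodWeight q σ)
      = ∑ σ ∈ G, ∏ j, ENNReal.ofReal (q (σ j)) := by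
        rw [ENNReal.ofReal_sum_of_nonneg fun σ _ => prodWeight_nonneg hq σ]
        simp only [prodWeight, ENNReal.ofReal_prod_of_nonneg fun j _ => hq _]
    _ ≤ ∑ σ ∈ G, Measure.pi (fun _ => ν) (Set.univ.pi fun j => R (σ j)) := by
        gcongr with σ
        rw [Measure.pi_pi]
        exact Finset.prod_le_prod' fun j _ => hν (σ j)
    _ = Measure.pi (fun _ => ν) (⋃ σ ∈ G, Set.univ.pi fun j => R (σ j)) :=
        (measure_biUnion_finset hboxes fun σ _ => MeasurableSet.univ_pi fun j => hR (σ j)).symm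
    _ ≤ _ := measure_mono (Set.iUnion₂_subset hE)

lemma ofReal_le_sum_smul_map_range [Fintype ι] (q : ι → ℝ) {γ : ι → ℝ → X}
    (hγ : ∀ i, Measurable (γ i)) (i : ι) :
    ENNReal.ofReal (q i) ≤ (∑ k, ENNReal.ofReal (q k) • ((ENNReal.ofReal (2 * π))⁻¹ •
      Measure.map (γ k) (volume.restrict (Set.Ioc 0 (2 * π))))) (Set.range (γ i)) := by
  rw [Measure.finsetSum_apply]
  refine le_trans ?_ (Finset.single_le_sum (fun _ _ => zero_le) (Finset.mem_univ i))
  simp only [Measure.smul_apply, smul_eq_mul]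
  calc ENNReal.ofReal (q i)
      = ENNReal.ofReal (q i) * ((ENNReal.ofReal (2 * π))⁻¹ *
          volume.restrict (Set.Ioc 0 (2 * π)) (γ i ⁻¹' Set.range (γ i))) := by
        rw [Set.preimage_range, Measure.restrict_apply_univ, Real.volume_Ioc, sub_zero,
          ENNReal.inv_mul_cancel (by simp [pi_pos]) ENNReal.ofReal_ne_top, mul_one]
    _ ≤ _ := by
        gcongr
        exact Measure.le_map_apply (hγ i).aemeasurable _

end Measure

open MeasureTheory Metric
open scoped ENNReal

theorem sample_covers_T_whp_general (d κ : ℕ) (hκ : 0 < κ)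
    (T : Finset (Fin (2 * κ))) (hT : T.card = κ)
    (c u v : Fin (2 * κ) → EuclideanSpace ℝ (Fin d))
    (circ : Fin (2 * κ) → ℝ → EuclideanSpace ℝ (Fin d))
    (hcirc : ∀ i θ, circ i θ = c i + Real.cos θ • u i + Real.sin θ • v i)
    (hsep : ∀ i j θ θ', i ≠ j → 3 ≤ dist (circ i θ) (circ j θ'))
    (pT : Measure (EuclideanSpace ℝ (Fin d)))
    (hpT : pT = ∑ i : Fin (2 * κ),
      (ENNReal.ofReal (if i ∈ T then (1 : ℝ) / (3 * κ) else 2 / (3 * κ))) •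
        ((ENNReal.ofReal (2 * Real.pi))⁻¹ •
          Measure.map (circ i) (volume.restrict (Set.Ioc 0 (2 * Real.pi)))))
    [IsProbabilityMeasure pT]
    (μ : Measure (Fin κ → EuclideanSpace ℝ (Fin d)))
    (hμ : μ = Measure.pi (fun _ : Fin κ => pT)) :
    1 - 4 * Real.exp (-(κ : ℝ) / 2048) ≤
      (μ {f | (κ : ℝ) / 8 ≤
            ({i | i ∈ T ∧ {j : Fin κ | f j ∈ Set.range (circ i)}.ncard = 1}.ncard : ℝ) ∧
          (κ : ℝ) / 8 ≤
            ({i | i ∉ T ∧ {j : Fin κ | f j ∈ Set.range (circ i)}.ncard = 1}.ncard : ℝ)}).toReal := by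
  subst hμ
  have hTc : Tᶜ.card = κ := by rw [Finset.card_compl, Fintype.card_fin, hT]; omega
  have hcont : ∀ i, Continuous (circ i) := fun i => by rw [funext (hcirc i)]; fun_prop
  have hperiodic : ∀ i, Function.Periodic (circ i) (2 * Real.pi) := fun i θ => by
    simp [hcirc]
  have hmeas : ∀ i, MeasurableSet (Set.range (circ i)) := fun i =>
    ((hperiodic i).compact_of_continuous Real.two_pi_pos.ne' (hcont i)).isClosed.measurableSet
  have hdisj : Pairwise fun i j => Disjoint (Set.range (circ i)) (Set.range (circ j)) :=
    fun i j hij => Set.disjoint_left.2 fun _ ⟨θ, hθ⟩ ⟨θ', hθ'⟩ => by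
      have := hsep i j θ θ' hij
      rw [hθ, hθ', dist_self] at this
      norm_num at this
  have hmass : ∀ i, ENNReal.ofReal (coverWeight κ T i) ≤ pT (Set.range (circ i)) := fun i => by
    rw [hpT]
    exact ofReal_le_sum_smul_map_range _ (fun k => (hcont k).measurable) i
  calc 1 - 4 * Real.exp (-(κ : ℝ) / 2048) ≤ 1 - 2 * Real.exp (-(κ : ℝ) / 2048) := by
        linarith [Real.exp_pos (-(κ : ℝ) / 2048)]
    _ ≤ _ := one_sub_two_mul_exp_le_sum_prodWeight_coverWeight hκ hT hTc
    _ ≤ _ := by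
        rw [← ENNReal.ofReal_le_iff_le_toReal (measure_ne_top _ _)]
        refine ofReal_sum_prodWeight_le_pi hmeas hdisj coverWeight_nonneg hmass _
          fun σ hσ f hf => ?_
        simp only [Finset.mem_filter] at hσ
        simp only [Set.mem_ofPred_eq, setOf_mem_eq_of_mem_pi hdisj hf, ← Finset.mem_compl,
          ncard_setOf_mem_and_ncard_eq_one]
        exact hσ.2

/-- With probability at least `1 − 4·exp(−κ/2048)`, a sample of `κ` i.i.d. points from
`p_T` covers `T`: at least `κ/8` circles indexed in `T` and at least `κ/8` circles indexed
outside `T` contain exactly one sample point. -/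
theorem sample_covers_T_whp (d κ : ℕ) (hκ : 0 < κ)
    (T : Finset (Fin (2 * κ))) (hT : T.card = κ)
    (c u v : Fin (2 * κ) → EuclideanSpace ℝ (Fin d))
    (hu : ∀ i, ‖u i‖ = 1) (hv : ∀ i, ‖v i‖ = 1) (huv : ∀ i, (inner ℝ (u i) (v i) : ℝ) = 0)
    (circ : Fin (2 * κ) → ℝ → EuclideanSpace ℝ (Fin d))
    (hcirc : ∀ i θ, circ i θ = c i + Real.cos θ • u i + Real.sin θ • v i)
    (hsep : ∀ i j θ θ', i ≠ j → 3 ≤ dist (circ i θ) (circ j θ'))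
    (pT : Measure (EuclideanSpace ℝ (Fin d)))
    (hpT : pT = ∑ i : Fin (2 * κ),
      (ENNReal.ofReal (if i ∈ T then (1 : ℝ) / (3 * κ) else 2 / (3 * κ))) •
        ((ENNReal.ofReal (2 * Real.pi))⁻¹ •
          Measure.map (circ i) (volume.restrict (Set.Ioc 0 (2 * Real.pi)))))
    [IsProbabilityMeasure pT]
    (μ : Measure (Fin κ → EuclideanSpace ℝ (Fin d)))
    (hμ : μ = Measure.pi (fun _ : Fin κ => pT)) :
    1 - 4 * Real.exp (-(κ : ℝ) / 2048) ≤
      (μ {f | (κ : ℝ) / 8 ≤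
            ({i | i ∈ T ∧ {j : Fin κ | f j ∈ Set.range (circ i)}.ncard = 1}.ncard : ℝ) ∧
          (κ : ℝ) / 8 ≤
            ({i | i ∉ T ∧ {j : Fin κ | f j ∈ Set.range (circ i)}.ncard = 1}.ncard : ℝ)}).toReal :=
  sample_covers_T_whp_general d κ hκ T hT c u v circ hcirc hsep pT hpT μ hμ
end

section
/- Let k be a positive integer, φ = 1/(2k), and suppose positive reals r_*, s_* satisfy (1+φ/2)^{-1} ≤ r_*^k/(2 s_*^k) ≤ 1 + φ/2. Then k/(1 + log₂(1+φ/2)) ≤ 1/log₂(r_*/s_*) ≤ k/(1 − log₂(1+φ/2)), and rounding 1/log₂(r_*/s_*) to the nearest integer yields exactly k. -/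
set_option maxHeartbeats 1000000


/-- If `(1+φ/2)⁻¹ ≤ r_*^k/(2 s_*^k) ≤ 1+φ/2` with `φ = 1/(2k)`, then
`k/(1 + log₂(1+φ/2)) ≤ 1/log₂(r_*/s_*) ≤ k/(1 − log₂(1+φ/2))`, and rounding
`1/log₂(r_*/s_*)` to the nearest integer recovers `k` exactly. -/
theorem dimension_estimate_correct (k : ℕ) (hk : 0 < k) (φ : ℝ) (hφ : φ = 1 / (2 * k))
    (r s : ℝ) (hr : 0 < r) (hs : 0 < s)
    (hlow : (1 + φ / 2)⁻¹ ≤ r ^ k / (2 * s ^ k))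
    (hhigh : r ^ k / (2 * s ^ k) ≤ 1 + φ / 2) :
    ((k : ℝ) / (1 + Real.logb 2 (1 + φ / 2)) ≤ 1 / Real.logb 2 (r / s) ∧
      1 / Real.logb 2 (r / s) ≤ (k : ℝ) / (1 - Real.logb 2 (1 + φ / 2))) ∧
    round (1 / Real.logb 2 (r / s)) = (k : ℤ) := by
  have hk' : (0:ℝ) < k := by exact_mod_cast hk
  have hk1 : (1:ℝ) ≤ k := by exact_mod_cast hk
  have hy4 : 1 + φ / 2 = 1 + 1 / (4 * (k:ℝ)) := by
    rw [hφ]; field_simp; ring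
  set y : ℝ := 1 + φ / 2 with hy
  have hy1 : 1 < y := by rw [hy4]; have : 0 < 1 / (4*(k:ℝ)) := by positivity
                         linarith
  have hy0 : 0 < y := by linarith
  set c := Real.logb 2 y with hc
  have hcpos : 0 < c := Real.logb_pos one_lt_two hy1
  -- key inequality : (2k+1) * c < 1
  have hpow : y ^ (2*k+1) < 2 := by
    rcases Nat.lt_or_ge k 2 with h2 | h2
    · interval_cases k
      · rw [hy4]; norm_num
    · have hk2 : (2:ℝ) ≤ k := by exact_mod_cast h2
      have hyle : y ≤ Real.exp (1 / (4*(k:ℝ))) := by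
        rw [hy4]
        have := Real.add_one_le_exp (1 / (4*(k:ℝ)))
        linarith
      have h1 : y ^ (2*k+1) ≤ Real.exp (1 / (4*(k:ℝ))) ^ (2*k+1) :=
        pow_le_pow_left₀ (by linarith) hyle _
      have h2' : Real.exp (1 / (4*(k:ℝ))) ^ (2*k+1)
          = Real.exp ((2*(k:ℝ)+1) / (4*(k:ℝ))) := by
        rw [← Real.exp_nat_mul]
        congr 1
        push_cast
        field_simp
      have h3 : ((2*(k:ℝ)+1) / (4*(k:ℝ))) ≤ 5/8 := by
        rw [div_le_iff₀ (by positivity)]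
        nlinarith
      have h4 : Real.exp ((2*(k:ℝ)+1) / (4*(k:ℝ))) ≤ Real.exp (5/8) :=
        Real.exp_le_exp.mpr h3
      have h5 : Real.exp (5/8) < 2 := by
        have hlog : (5/8 : ℝ) < Real.log 2 := by
          have := Real.log_two_gt_d9
          linarith
        calc Real.exp (5/8) < Real.exp (Real.log 2) := Real.exp_lt_exp.mpr hlog
          _ = 2 := Real.exp_log two_pos
      linarith
  have hkey : (2*(k:ℝ)+1) * c < 1 := by
    have h1 : Real.logb 2 (y ^ (2*k+1)) < Real.logb 2 2 :=
      Real.logb_lt_logb one_lt_two (by positivity) hpow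
    rw [Real.logb_pow, Real.logb_self_eq_one one_lt_two] at h1
    push_cast at h1
    linarith
  have hc3 : c < 1/3 := by nlinarith
  -- relate the hypotheses to L = logb 2 (r/s)
  set L := Real.logb 2 (r / s) with hL
  have hx0 : 0 < r / s := by positivity
  have hxk : (r/s) ^ k / 2 = r ^ k / (2 * s ^ k) := by
    rw [div_pow]; field_simp
  have hxk0 : 0 < (r/s) ^ k / 2 := by positivity
  have hlogxk : Real.logb 2 ((r/s) ^ k / 2) = k * L - 1 := by
    rw [Real.logb_div (by positivity) (by norm_num), Real.logb_pow,
      Real.logb_self_eq_one one_lt_two]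
  have hub : (k:ℝ) * L - 1 ≤ c := by
    have := (Real.logb_le_logb one_lt_two hxk0 hy0).mpr (by rw [hxk]; exact hhigh)
    rwa [hlogxk] at this
  have hlb : -c ≤ (k:ℝ) * L - 1 := by
    have hlow' : y⁻¹ ≤ (r/s)^k/2 := by rw [hxk]; exact hlow
    have h := (Real.logb_le_logb one_lt_two (inv_pos.mpr hy0) hxk0).mpr hlow'
    rwa [hlogxk, Real.logb_inv] at h
  clear_value c L
  clear hlow hhigh hφ hy4 hy1 hy0 hy hc hL hxk hxk0 hlogxk hx0
  -- deduce L > 0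
  have hkL : 1 - c ≤ (k:ℝ) * L := by linarith
  have hkL' : (k:ℝ) * L ≤ 1 + c := by linarith
  have hLpos : 0 < L := by nlinarith
  have h1c : 0 < 1 - c := by linarith
  have h1c' : 0 < 1 + c := by linarith
  have hleft : (k:ℝ) / (1 + c) ≤ 1 / L := by
    rw [div_le_div_iff₀ h1c' hLpos]; linarith
  have hright : 1 / L ≤ (k:ℝ) / (1 - c) := by
    rw [div_le_div_iff₀ hLpos h1c]; linarith
  refine ⟨⟨hleft, hright⟩, ?_⟩
  rw [round_eq, Int.floor_eq_iff]
  constructor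
  · push_cast
    have : (k:ℝ) - 1/2 ≤ (k:ℝ) / (1 + c) := by
      rw [le_div_iff₀ h1c']; nlinarith [hkey, hcpos, hk1]
    linarith
  · push_cast
    have : (k:ℝ) / (1 - c) < (k:ℝ) + 1/2 := by
      rw [div_lt_iff₀ h1c]; nlinarith [hkey, hcpos, hk1]
    linarith
end
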